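/- Let r ∈ (0,1) and let f(x) = e^{−x}·1_{(0,∞)}(x) be the standard exponential density on ℝ. Then N_r(f) = (1/r)^{2/(1−r)}, (f⋆f)(x) = x e^{−x}·1_{(0,∞)}(x), and N_r(f⋆f) = (Γ(r+1)/r^{r+1})^{2/(1−r)}. Consequently, any α > 0 satisfying N_r(f⋆f)^α ≥ 2·N_r(f)^α must satisfy α ≥ (1−r)·log 2 / (2·log Γ(r+1) + 2r·log(1/r)). -/

import Mathlib

/-!
Both Rényi integrals are Gamma integrals: on `(0, ∞)` one has
`(x^a e^{-x})^r = x^{ar} e^{-rx}`, whose integral is `Γ(ar + 1) / r^{ar + 1}`; the density is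
`x^0 e^{-x}` for `f` and `x^1 e^{-x}` for `f ⋆ f`. The convolution is supported on `(0, ∞)` and
its integrand is the constant `e^{-x}` on `(0, x)`. Taking logarithms in
`N_r(f⋆f)^α ≥ 2 N_r(f)^α` gives `α (log N_r(f⋆f) - log N_r(f)) ≥ log 2`, and the
difference of logarithms is `(2 log Γ(r+1) + 2r log(1/r)) / (1 - r)`.
-/

open MeasureTheory Real Set

/-- The Rényi entropy power of order `r` of a density `f` on `ℝ` (the case `n = 1`). -/
noncomputable def renyiNP1 (r : ℝ) (f : ℝ → ℝ) : ℝ :=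
  (∫ x, f x ^ r) ^ (2 / (1 - r))

/-- Convolution of two functions on `ℝ`. -/
noncomputable def conv1 (f g : ℝ → ℝ) : ℝ → ℝ :=
  fun x => ∫ y, f (x - y) * g y

theorem integral_indicator_Ioi_rpow_mul_exp_neg_rpow {a r : ℝ} (hr : 0 < r) (har : -1 < a * r) :
    ∫ x, (Ioi 0).indicator (fun x => x ^ a * exp (-x)) x ^ r
      = Gamma (a * r + 1) / r ^ (a * r + 1) := by
  have hpow : (fun x => (Ioi 0).indicator (fun x => x ^ a * exp (-x)) x ^ r)
      = (Ioi 0).indicator fun x => (x ^ a * exp (-x)) ^ r :=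
    (indicator_comp_of_zero (g := fun y : ℝ => y ^ r) (zero_rpow hr.ne')).symm
  rw [hpow, integral_indicator measurableSet_Ioi]
  calc ∫ x in Ioi 0, (x ^ a * exp (-x)) ^ r
      = ∫ x in Ioi 0, x ^ (a * r + 1 - 1) * exp (-(r * x)) := by
        refine setIntegral_congr_fun measurableSet_Ioi fun x (hx : 0 < x) => ?_
        rw [mul_rpow (rpow_nonneg hx.le a) (exp_pos _).le, ← rpow_mul hx.le, ← exp_mul]
        ring_nf
    _ = Gamma (a * r + 1) / r ^ (a * r + 1) := by
        rw [integral_rpow_mul_exp_neg_mul_Ioi (by linarith) hr, one_div, inv_rpow hr.le,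
          inv_mul_eq_div]

theorem indicator_Ioi_sub_mul_indicator_Ioi (g h : ℝ → ℝ) (x y : ℝ) :
    (Ioi 0).indicator g (x - y) * (Ioi 0).indicator h y
      = (Ioo 0 x).indicator (fun y => g (x - y) * h y) y := by
  by_cases hy : 0 < y <;> by_cases hxy : y < x <;>
    simp [indicator, hy, hxy, sub_pos]

theorem conv1_indicator_Ioi (g h : ℝ → ℝ) (x : ℝ) :
    conv1 ((Ioi 0).indicator g) ((Ioi 0).indicator h) x
      = ∫ y in Ioo 0 x, g (x - y) * h y := by
  simp only [conv1, indicator_Ioi_sub_mul_indicator_Ioi, integral_indicator measurableSet_Ioo]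

theorem conv1_indicator_Ioi_exp_neg_mul_self (c : ℝ) :
    conv1 ((Ioi 0).indicator fun x => exp (-(c * x))) ((Ioi 0).indicator fun x => exp (-(c * x)))
      = (Ioi 0).indicator fun x => x * exp (-(c * x)) := by
  ext x
  have hexp : ∀ y, exp (-(c * (x - y))) * exp (-(c * y)) = exp (-(c * x)) := fun y => by
    rw [← exp_add]; ring_nf
  rw [conv1_indicator_Ioi]
  simp only [hexp, setIntegral_const, Real.volume_real_Ioo, smul_eq_mul, sub_zero]
  by_cases hx : 0 < x
  · simp [hx, hx.le]
  · simp [hx, not_lt.1 hx]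

theorem log_div_log_le_of_two_mul_rpow_le {a b α : ℝ} (ha : 0 < a) (hb : 0 < b) (hα : 0 < α)
    (h : 2 * a ^ α ≤ b ^ α) : log 2 / (log b - log a) ≤ α := by
  have hlog : log 2 + α * log a ≤ α * log b := by
    have := log_le_log (by positivity) h
    rwa [log_mul two_ne_zero (rpow_pos_of_pos ha α).ne', log_rpow ha, log_rpow hb] at this
  have hlog2 : 0 < log 2 := log_pos one_lt_two
  have hba : 0 < log b - log a := by nlinarith
  rw [div_le_iff₀ hba]
  linarith

theorem exponential_renyi_computation (r : ℝ) (hr : r ∈ Set.Ioo (0 : ℝ) 1)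
    (f : ℝ → ℝ)
    (hf : f = Set.indicator (Set.Ioi (0 : ℝ)) fun x => Real.exp (-x)) :
    renyiNP1 r f = (1 / r) ^ (2 / (1 - r)) ∧
    conv1 f f = Set.indicator (Set.Ioi (0 : ℝ)) (fun x => x * Real.exp (-x)) ∧
    renyiNP1 r (conv1 f f) = (Real.Gamma (r + 1) / r ^ (r + 1)) ^ (2 / (1 - r)) ∧
    ∀ α : ℝ, 0 < α →
      renyiNP1 r (conv1 f f) ^ α ≥ 2 * renyiNP1 r f ^ α →
      α ≥ (1 - r) * Real.log 2 /
        (2 * Real.log (Real.Gamma (r + 1)) + 2 * r * Real.log (1 / r)) := by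
  obtain ⟨hr0, hr1⟩ := hr
  have hff : conv1 f f = (Ioi 0).indicator fun x => x * exp (-x) := by
    simpa [hf] using conv1_indicator_Ioi_exp_neg_mul_self 1
  have hNf : renyiNP1 r f = (1 / r) ^ (2 / (1 - r)) := by
    have hf₀ : f = (Ioi 0).indicator fun x => x ^ (0 : ℝ) * exp (-x) := by simp [hf]
    rw [renyiNP1, hf₀, integral_indicator_Ioi_rpow_mul_exp_neg_rpow hr0 (by linarith)]
    simp
  have hNff : renyiNP1 r (conv1 f f) = (Gamma (r + 1) / r ^ (r + 1)) ^ (2 / (1 - r)) := by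
    have hff₁ : conv1 f f = (Ioi 0).indicator fun x => x ^ (1 : ℝ) * exp (-x) := by simp [hff]
    rw [renyiNP1, hff₁, integral_indicator_Ioi_rpow_mul_exp_neg_rpow hr0 (by linarith), one_mul]
  refine ⟨hNf, hff, hNff, fun α hα h => ?_⟩
  have hΓ : 0 < Gamma (r + 1) := Gamma_pos_of_pos (by linarith)
  have hlog : log (renyiNP1 r (conv1 f f)) - log (renyiNP1 r f)
      = (2 * log (Gamma (r + 1)) + 2 * r * log (1 / r)) / (1 - r) := by
    rw [hNf, hNff, log_rpow (by positivity), log_rpow (by positivity),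
      log_div hΓ.ne' (by positivity), log_rpow hr0, one_div, log_inv]
    field_simp
    ring
  have key := log_div_log_le_of_two_mul_rpow_le (by rw [hNf]; positivity)
    (by rw [hNff]; positivity) hα h
  rwa [hlog, div_div_eq_mul_div, mul_comm] at key
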